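/- Let φ: A* → A* be non-erasing with alph(φ^n(a)) = alph(φ(a)) for every a ∈ A and n ≥ 1, let A' be a leaf of the tree of invariant subalphabets of φ, let g ∈ A' be an unbounded letter, and let G' = (A', φ|_{A'}, g). If G' is pushy, then every infinite factor of L_{G'} contains arbitrarily long factors consisting only of bounded letters: for every M ∈ ℕ, every infinite word 𝐰 whose prefixes all lie in L_{G'} has a factor of length at least M over bounded letters. -/

import Mathlib

/-- The extension of the morphism given by `φ` on letters to a morphism on words. -/
def extM {A B : Type*} (φ : A → List B) (w : List A) : List B := w.flatMap φ

/-- The `k`-th power `u^k` of a word `u`. -/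
def wpow {A : Type*} (u : List A) (k : ℕ) : List A := (List.replicate k u).flatten

/-- A word `v` is primitive if `v = u^k` implies `k = 1`. -/
def Primitive {A : Type*} (v : List A) : Prop :=
  v ≠ [] ∧ ∀ (u : List A) (k : ℕ), v = wpow u k → k = 1

/-- The language of the D0L-system `(A, φ, w)`: all factors of the words `φ^n(w)`. -/
def LangD0L {A : Type*} (φ : A → List A) (w : List A) : Set (List A) :=
  {v | ∃ n : ℕ, v <:+: (extM φ)^[n] w}

/-- `fact(Ψ(L))`: all factors of `Ψ`-images of elements of `L`. -/
def factImg {A B : Type*} (Ψ : A → List B) (L : Set (List A)) : Set (List B) :=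
  {v | ∃ u ∈ L, v <:+: extM Ψ u}

/-- The language of the HD0L-system `(A, φ, w, Ψ)`. -/
def LangHD0L {A B : Type*} (φ : A → List A) (w : List A) (Ψ : A → List B) : Set (List B) :=
  factImg Ψ (LangD0L φ w)

/-- A morphism is non-erasing if no letter is mapped to the empty word. -/
def NonErasing {A B : Type*} (φ : A → List B) : Prop := ∀ a, φ a ≠ []

/-- A letter `b` is bounded (w.r.t. `φ`) if the lengths `|φ^n(b)|` are bounded. -/
def BddLetter {A : Type*} (φ : A → List A) (b : A) : Prop :=
  ∃ C : ℕ, ∀ n : ℕ, ((extM φ)^[n] [b]).length ≤ C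

/-- The set of letters occurring in a word. -/
def alph {A : Type*} (u : List A) : Set A := {a | a ∈ u}

/-- `alph(φ(S))` for a set of letters `S`: letters occurring in `φ(b)` for some `b ∈ S`. -/
def alphIm {A : Type*} (φ : A → List A) (S : Set A) : Set A := ⋃ b ∈ S, alph (φ b)

/-- A D0L-system is pushy if its language contains infinitely many words over bounded letters. -/
def Pushy {A : Type*} (φ : A → List A) (w : List A) : Prop :=
  {v ∈ LangD0L φ w | ∀ a ∈ v, BddLetter φ a}.Infinite

/-- A factorial language `L` is uniformly recurrent: for every `n` there is `K` such that
every element of `L` of length `K` contains every element of `L` of length `n` as a factor. -/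
def UnifRec {A : Type*} (L : Set (List A)) : Prop :=
  ∀ n : ℕ, ∃ K : ℕ, ∀ u ∈ L, u.length = K → ∀ v ∈ L, v.length = n → v <:+: u

/-- Vertices of the tree of invariant subalphabets of `φ`: nonempty sets `S` with
`alph(φ(S)) = S` containing an unbounded letter `a` with `alph(φ(a)) = S`. -/
def IsVertex {A : Type*} (φ : A → List A) (S : Set A) : Prop :=
  S.Nonempty ∧ alphIm φ S = S ∧ ∃ a ∈ S, ¬ BddLetter φ a ∧ alph (φ a) = S

/-- Leaves of the tree of invariant subalphabets: minimal vertices w.r.t. inclusion. -/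
def IsLeaf {A : Type*} (φ : A → List A) (S : Set A) : Prop :=
  IsVertex φ S ∧ ∀ T, IsVertex φ T → T ⊆ S → T = S

/-- Two words are conjugate: `u = xy` and `v = yx`. -/
def Conj {A : Type*} (u v : List A) : Prop := ∃ x y : List A, u = x ++ y ∧ v = y ++ x

/-- The prefix of length `n` of an infinite word. -/
def prefW {A : Type*} (w : ℕ → A) (n : ℕ) : List A := (List.range n).map w

/-
An infinite factor `w` of `L_{G'}` can be desubstituted by `ψ = φ^N`: by compactness (a limit
along an ultrafilter) there is an infinite factor `w'` of `L_{G'}` such that `ψ(w')`, with a proper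
prefix of its first block removed, is `w`. This needs every word of `L_{G'}` to be a factor of a
`ψ`-image, which holds because in a leaf every unbounded letter `a` has `alph(φ(a)) = A'`, so
`g` occurs in `φ(g)`. Take `N = n₀ + 1`, where pushiness gives a long bounded factor `t` of
`φ^{n₀}(g)`. If some letter of `w'` after the first one is unbounded, its `ψ`-image, a factor of
`w`, contains `φ^{n₀}(g)` and hence `t`. Otherwise the `ψ`-image of `M` bounded letters of `w'`
is a factor of `w` over bounded letters of length at least `M`.
-/

open Filter

section

variable {A B : Type*}

section Morphism

theorem extM_nil (ψ : A → List B) : extM ψ [] = [] := rfl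

theorem extM_cons (ψ : A → List B) (a : A) (u : List A) :
    extM ψ (a :: u) = ψ a ++ extM ψ u := List.flatMap_cons

theorem extM_singleton (ψ : A → List B) (a : A) : extM ψ [a] = ψ a :=
  List.flatMap_singleton ψ a

theorem extM_append (ψ : A → List B) (u v : List A) :
    extM ψ (u ++ v) = extM ψ u ++ extM ψ v := List.flatMap_append

theorem List.IsInfix.extM {u v : List A} (h : u <:+: v) (ψ : A → List B) :
    _root_.extM ψ u <:+: _root_.extM ψ v := h.flatMap ψ

theorem List.IsPrefix.extM {u v : List A} (h : u <+: v) (ψ : A → List B) :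
    _root_.extM ψ u <+: _root_.extM ψ v := h.flatMap ψ

theorem iterate_extM_append (φ : A → List A) (n : ℕ) (u v : List A) :
    (extM φ)^[n] (u ++ v) = (extM φ)^[n] u ++ (extM φ)^[n] v := by
  induction n generalizing u v with
  | zero => rfl
  | succ n ih => simp only [Function.iterate_succ_apply, extM_append, ih]

theorem List.IsInfix.iterate_extM {φ : A → List A} {u v : List A} (h : u <:+: v) (n : ℕ) :
    (_root_.extM φ)^[n] u <:+: (_root_.extM φ)^[n] v := by
  induction n with
  | zero => exact h
  | succ n ih =>
    simp only [Function.iterate_succ_apply']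
    exact ih.extM φ

theorem extM_iterate_extM_singleton (φ : A → List A) (n : ℕ) :
    extM (fun a => (extM φ)^[n] [a]) = (extM φ)^[n] := by
  funext u
  induction u with
  | nil => exact (Function.iterate_fixed (extM_nil φ) n).symm
  | cons a u ih =>
    rw [extM_cons, ih, ← iterate_extM_append]
    rfl

theorem length_le_length_extM {ψ : A → List B} (hψ : NonErasing ψ) (u : List A) :
    u.length ≤ (extM ψ u).length := by
  induction u with
  | nil => rfl
  | cons a u ih =>
    have := List.length_pos_iff.mpr (hψ a)
    rw [extM_cons, List.length_append, List.length_cons]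
    omega

theorem length_le_length_iterate_extM {φ : A → List A} (hφ : NonErasing φ) (n : ℕ)
    (u : List A) : u.length ≤ ((extM φ)^[n] u).length := by
  induction n with
  | zero => rfl
  | succ n ih =>
    rw [Function.iterate_succ_apply']
    exact ih.trans (length_le_length_extM hφ _)

theorem length_extM_le {ψ : A → List B} {C : ℕ} (hC : ∀ a, (ψ a).length ≤ C) (u : List A) :
    (extM ψ u).length ≤ C * u.length := by
  induction u with
  | nil => simp [extM_nil]
  | cons a u ih =>
    rw [extM_cons, List.length_append, List.length_cons, mul_add_one]
    have := hC a
    omega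

theorem singleton_infix_of_mem {a : A} {u : List A} (h : a ∈ u) : [a] <:+: u := by
  obtain ⟨s, t, rfl⟩ := List.append_of_mem h
  exact ⟨s, t, by simp⟩

end Morphism

section InfiniteWord

def factorW (w : ℕ → A) (i k : ℕ) : List A := (List.range k).map fun l => w (i + l)

theorem length_prefW (w : ℕ → A) (n : ℕ) : (prefW w n).length = n := by simp [prefW]

theorem prefW_one (w : ℕ → A) : prefW w 1 = [w 0] := rfl

theorem apply_mem_prefW (w : ℕ → A) {i n : ℕ} (h : i < n) : w i ∈ prefW w n :=
  List.mem_map_of_mem (List.mem_range.mpr h)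

@[simp]
theorem length_factorW (w : ℕ → A) (i k : ℕ) : (factorW w i k).length = k := by simp [factorW]

theorem factorW_one (w : ℕ → A) (i : ℕ) : factorW w i 1 = [w i] := rfl

theorem prefW_add (w : ℕ → A) (i k : ℕ) : prefW w (i + k) = prefW w i ++ factorW w i k := by
  simp [prefW, factorW, List.range_add]

theorem prefW_prefix (w : ℕ → A) {k n : ℕ} (h : k ≤ n) : prefW w k <+: prefW w n := by
  obtain ⟨l, rfl⟩ := Nat.exists_eq_add_of_le h
  rw [prefW_add]
  exact List.prefix_append _ _

theorem take_eq_prefW {l : List A} {d : A} {w : ℕ → A} {n : ℕ} (hn : n ≤ l.length)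
    (h : ∀ i < n, l.getD i d = w i) : l.take n = prefW w n := by
  refine List.ext_getElem (by simp [length_prefW, hn]) fun i hi _ => ?_
  obtain ⟨hin, hil⟩ : i < n ∧ i < l.length := by simpa using hi
  rw [List.getElem_take, ← List.getD_eq_getElem l d hil, h i hin]
  simp [prefW]

end InfiniteWord

section Bounded

variable {φ : A → List A}

theorem BddLetter.of_mem {b c : A} (hc : BddLetter φ c) (hb : b ∈ φ c) : BddLetter φ b := by
  obtain ⟨C, hC⟩ := hc
  refine ⟨C, fun n => le_trans ?_ (hC (n + 1))⟩
  rw [Function.iterate_succ_apply, extM_singleton]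
  exact ((singleton_infix_of_mem hb).iterate_extM n).length_le

theorem bddLetter_of_mem_iterate_extM {u : List A} (hu : ∀ a ∈ u, BddLetter φ a) (n : ℕ) :
    ∀ b ∈ (extM φ)^[n] u, BddLetter φ b := by
  induction n with
  | zero => exact hu
  | succ n ih =>
    intro b hb
    rw [Function.iterate_succ_apply'] at hb
    obtain ⟨c, hc, hbc⟩ := List.mem_flatMap.mp hb
    exact (ih c hc).of_mem hbc

theorem exists_length_iterate_extM_le {u : List A} (hu : ∀ a ∈ u, BddLetter φ a) :
    ∃ C, ∀ n, ((extM φ)^[n] u).length ≤ C := by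
  induction u with
  | nil => exact ⟨0, fun n => by rw [Function.iterate_fixed (extM_nil φ)]; rfl⟩
  | cons a u ih =>
    obtain ⟨C₁, h₁⟩ := hu a List.mem_cons_self
    obtain ⟨C₂, h₂⟩ := ih fun b hb => hu b (List.mem_cons_of_mem a hb)
    refine ⟨C₁ + C₂, fun n => ?_⟩
    rw [← List.singleton_append, iterate_extM_append, List.length_append]
    exact add_le_add (h₁ n) (h₂ n)

theorem exists_mem_not_bddLetter {a : A} (ha : ¬ BddLetter φ a) :
    ∃ b ∈ φ a, ¬ BddLetter φ b := by
  by_contra! h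
  obtain ⟨C, hC⟩ := exists_length_iterate_extM_le h
  refine ha ⟨max C 1, fun n => ?_⟩
  cases n with
  | zero => exact le_max_right C 1
  | succ n =>
    rw [Function.iterate_succ_apply, extM_singleton]
    exact (hC n).trans (le_max_left C 1)

theorem Pushy.exists_mem_langD0L_length_ge [Finite A] {w : List A} (h : Pushy φ w) (M : ℕ) :
    ∃ t ∈ LangD0L φ w, M ≤ t.length ∧ ∀ a ∈ t, BddLetter φ a := by
  by_contra! hM
  refine h ((List.finite_length_le A M).subset fun v ⟨hv, hbdd⟩ =>
    show v.length ≤ M from not_lt.mp fun hlen => ?_)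
  obtain ⟨a, ha, hna⟩ := hM v hv hlen.le
  exact hna (hbdd a ha)

end Bounded

section Alphabet

variable {φ : A → List A}

theorem alph_extM (φ : A → List A) (u : List A) : alph (extM φ u) = alphIm φ (alph u) := by
  ext b
  simp [alph, alphIm, extM]

theorem alph_subset_of_alphIm_subset {S : Set A} (hS : alphIm φ S ⊆ S) {b : A} (hb : b ∈ S) :
    alph (φ b) ⊆ S :=
  fun _ hc => hS (Set.mem_biUnion hb hc)

theorem alph_iterate_extM_subset {S : Set A} (hS : alphIm φ S ⊆ S) {u : List A}
    (hu : alph u ⊆ S) (n : ℕ) : alph ((extM φ)^[n] u) ⊆ S := by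
  induction n with
  | zero => exact hu
  | succ n ih =>
    rw [Function.iterate_succ_apply', alph_extM]
    exact Set.iUnion₂_subset fun b hb => alph_subset_of_alphIm_subset hS (ih hb)

theorem mem_of_mem_langD0L {S : Set A} (hS : alphIm φ S ⊆ S) {w v : List A}
    (hw : alph w ⊆ S) (hv : v ∈ LangD0L φ w) {a : A} (ha : a ∈ v) : a ∈ S := by
  obtain ⟨n, hn⟩ := hv
  exact alph_iterate_extM_subset hS hw n (hn.subset ha)

theorem mem_langD0L_of_infix {w u v : List A} (hv : v ∈ LangD0L φ w) (huv : u <:+: v) :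
    u ∈ LangD0L φ w := by
  obtain ⟨n, hn⟩ := hv
  exact ⟨n, huv.trans hn⟩

theorem langD0L_subset_factImg_iterate {w : List A} {N : ℕ} (hw : w <:+: (extM φ)^[N] w) :
    LangD0L φ w ⊆ factImg (fun a => (extM φ)^[N] [a]) (LangD0L φ w) := by
  rintro v ⟨n, hv⟩
  refine ⟨(extM φ)^[n] w, ⟨n, List.infix_refl _⟩, ?_⟩
  rw [extM_iterate_extM_singleton, ← Function.iterate_add_apply, add_comm,
    Function.iterate_add_apply]
  exact hv.trans (hw.iterate_extM n)

end Alphabet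

section Leaf

/-- Assumption ∗ of the paper. -/
def AlphIterStable (φ : A → List A) : Prop :=
  ∀ (a : A) (n : ℕ), 1 ≤ n → alph ((extM φ)^[n] [a]) = alph (φ a)

variable {φ : A → List A}

theorem AlphIterStable.alphIm_alph (h : AlphIterStable φ) (c : A) :
    alphIm φ (alph (φ c)) = alph (φ c) := by
  rw [← alph_extM, ← h c 2 le_add_self]
  simp [Function.iterate_succ_apply, extM_singleton]

theorem AlphIterStable.alph_subset_of_mem (h : AlphIterStable φ) {b c : A} (hb : b ∈ φ c) :
    alph (φ b) ⊆ alph (φ c) :=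
  alph_subset_of_alphIm_subset (h.alphIm_alph c).le hb

theorem AlphIterStable.exists_isVertex_subset [Finite A] (h : AlphIterStable φ) {a : A}
    (ha : ¬ BddLetter φ a) : ∃ S, IsVertex φ S ∧ S ⊆ alph (φ a) := by
  obtain ⟨b, hmin⟩ := Set.Finite.exists_minimalFor (fun b => alph (φ b))
    {b | b ∈ φ a ∧ ¬ BddLetter φ b} (Set.toFinite _) (exists_mem_not_bddLetter ha)
  obtain ⟨⟨hba, hbu⟩, hbmin⟩ := hmin
  obtain ⟨c, hcb, hcu⟩ := exists_mem_not_bddLetter hbu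
  have hcb' : alph (φ c) ⊆ alph (φ b) := h.alph_subset_of_mem hcb
  have hca : c ∈ φ a := h.alph_subset_of_mem hba hcb
  have hcc : c ∈ alph (φ c) := hbmin ⟨hca, hcu⟩ hcb' hcb
  exact ⟨alph (φ c), ⟨⟨c, hcc⟩, h.alphIm_alph c, c, hcc, hcu, rfl⟩,
    hcb'.trans (h.alph_subset_of_mem hba)⟩

theorem IsLeaf.alph_eq [Finite A] {S : Set A} (hS : IsLeaf φ S) (h : AlphIterStable φ) {a : A}
    (ha : a ∈ S) (hau : ¬ BddLetter φ a) : alph (φ a) = S := by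
  obtain ⟨T, hT, hTa⟩ := h.exists_isVertex_subset hau
  have haS : alph (φ a) ⊆ S := alph_subset_of_alphIm_subset hS.1.2.1.le ha
  have hTS : T = S := hS.2 T hT (hTa.trans haS)
  exact haS.antisymm (hTS ▸ hTa)

theorem IsLeaf.iterate_extM_infix_iterate_extM_succ [Finite A] {S : Set A} (hS : IsLeaf φ S)
    (h : AlphIterStable φ) {g a : A} (hg : g ∈ S) (ha : a ∈ S) (hau : ¬ BddLetter φ a) (n : ℕ) :
    (extM φ)^[n] [g] <:+: (extM φ)^[n + 1] [a] := by
  rw [Function.iterate_succ_apply, extM_singleton]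
  exact (singleton_infix_of_mem ((hS.alph_eq h ha hau).symm ▸ hg : g ∈ alph (φ a))).iterate_extM n

end Leaf

section Desubstitution

theorem Ultrafilter.exists_eventually_eq_of_finite {ι X : Type*} (𝒰 : Ultrafilter ι) {s : Set X}
    (hs : s.Finite) {f : ι → X} (hf : ∀ᶠ i in 𝒰, f i ∈ s) : ∃ x, ∀ᶠ i in 𝒰, f i = x := by
  have hcover : {i | f i ∈ s} ⊆ ⋃ x ∈ s, {i | f i = x} := fun i hi => Set.mem_biUnion hi rfl
  obtain ⟨x, -, hx⟩ := (Ultrafilter.finite_biUnion_mem_iff hs).mp (𝒰.mem_of_superset hf hcover)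
  exact ⟨x, hx⟩

/-- Compactness of `ℕ → A`. -/
theorem exists_eventually_take_eq_prefW [Finite A] {ι : Type*} (𝒰 : Ultrafilter ι)
    (r : ι → List A) (hr : ∀ n, ∀ᶠ m in 𝒰, n ≤ (r m).length) :
    ∃ w : ℕ → A, ∀ n, ∀ᶠ m in 𝒰, (r m).take n = prefW w n := by
  obtain ⟨m, hm⟩ := (hr 1).exists
  have hletter : ∀ i, ∃ a, ∀ᶠ m' in 𝒰, (r m').getD i (r m)[0] = a := fun i =>
    𝒰.exists_eventually_eq_of_finite Set.finite_univ (Eventually.of_forall fun _ => trivial)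
  choose w hw using hletter
  refine ⟨w, fun n => ?_⟩
  filter_upwards [hr n, (eventually_all_finite (Set.finite_Iio n)).mpr fun i _ => hw i]
    with m' hlen hagree
  exact take_eq_prefW hlen hagree

theorem exists_cons_suffix_drop_eq (ψ : A → List B) :
    ∀ (u : List A) (i : ℕ), i < (extM ψ u).length → ∃ c q j, c :: q <:+ u ∧
      j < (ψ c).length ∧ (extM ψ u).drop i = (extM ψ (c :: q)).drop j
  | [], i, hi => absurd hi (Nat.not_lt_zero i)
  | a :: u, i, hi => by
    rw [extM_cons] at hi ⊢
    by_cases hia : i < (ψ a).length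
    · exact ⟨a, u, i, List.suffix_refl _, hia, by rw [extM_cons]⟩
    · rw [List.length_append] at hi
      obtain ⟨c, q, j, hsuf, hj, hdrop⟩ :=
        exists_cons_suffix_drop_eq ψ u (i - (ψ a).length) (by omega)
      refine ⟨c, q, j, hsuf.trans (List.suffix_cons a u), hj, ?_⟩
      rw [List.drop_append, List.drop_eq_nil_of_le (by omega), List.nil_append, hdrop]

theorem exists_cons_mem_prefix_drop_of_mem_factImg {ψ : A → List B} {L : Set (List A)}
    (hL : ∀ u ∈ L, ∀ v, v <:+: u → v ∈ L) {v : List B} (hv : v ∈ factImg ψ L) (hv₀ : v ≠ []) :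
    ∃ c q j, c :: q ∈ L ∧ j < (ψ c).length ∧ v <+: (extM ψ (c :: q)).drop j := by
  obtain ⟨u, hu, x, y, hxy⟩ := hv
  have hx : x.length < (extM ψ u).length := by
    have := List.length_pos_iff.mpr hv₀
    rw [← hxy, List.length_append, List.length_append]
    omega
  obtain ⟨c, q, j, hsuf, hj, hdrop⟩ := exists_cons_suffix_drop_eq ψ u x.length hx
  refine ⟨c, q, j, hL u hu _ hsuf.isInfix, hj, ⟨y, ?_⟩⟩
  rw [← hdrop, ← hxy, List.append_assoc, List.drop_left]

theorem exists_desubstitution [Finite A] {ψ : A → List B} {L : Set (List A)}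
    (hL : ∀ u ∈ L, ∀ v, v <:+: u → v ∈ L) {w : ℕ → B} (hw : ∀ n, prefW w n ∈ factImg ψ L) :
    ∃ (w' : ℕ → A) (j : ℕ), (∀ n, prefW w' n ∈ L) ∧ j < (ψ (w' 0)).length ∧
      ∀ n, ∃ k, (extM ψ (prefW w' n)).drop j <+: prefW w k := by
  obtain ⟨C, hC⟩ := Finite.exists_le fun a => (ψ a).length
  choose c q j hcqL hj hpre using fun m => exists_cons_mem_prefix_drop_of_mem_factImg hL
    (hw (m + 1)) (List.ne_nil_of_length_pos (by simp [length_prefW]))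
  let 𝒰 := Ultrafilter.of (atTop : Filter ℕ)
  have hlarge : ∀ N, ∀ᶠ m in (𝒰 : Filter ℕ), N ≤ m :=
    fun N => Ultrafilter.of_le _ (eventually_ge_atTop N)
  have hlen : ∀ n, ∀ᶠ m in 𝒰, n ≤ (c m :: q m).length := fun n => by
    filter_upwards [hlarge (C * n)] with m hm
    have h₁ := (hpre m).length_le
    have h₂ := length_extM_le hC (c m :: q m)
    rw [List.length_drop, length_prefW] at h₁
    exact (Nat.lt_of_mul_lt_mul_left (by omega : C * n < C * (c m :: q m).length)).le
  obtain ⟨w', hw'⟩ := exists_eventually_take_eq_prefW 𝒰 (fun m => c m :: q m) hlen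
  obtain ⟨J, hJ⟩ := 𝒰.exists_eventually_eq_of_finite (Set.finite_Iic C)
    (Eventually.of_forall fun m => (hj m).le.trans (hC (c m)))
  have hgood : ∀ n, ∃ m, C * n ≤ m ∧ j m = J ∧ (c m :: q m).take n = prefW w' n :=
    fun n => ((hlarge (C * n)).and (hJ.and (hw' n))).exists
  refine ⟨w', J, fun n => ?_, ?_, fun n => ?_⟩
  · obtain ⟨m, -, -, htake⟩ := hgood n
    exact htake ▸ hL _ (hcqL m) _ (List.take_prefix n _).isInfix
  · obtain ⟨m, -, rfl, htake⟩ := hgood 1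
    simp only [List.take_succ_cons, List.take_zero, prefW_one, List.cons.injEq] at htake
    exact htake.1 ▸ hj m
  · obtain ⟨m, hm, rfl, htake⟩ := hgood n
    refine ⟨m + 1, List.prefix_of_prefix_length_le
      ((htake ▸ List.take_prefix n _ : prefW w' n <+: _).extM ψ |>.drop (j m)) (hpre m) ?_⟩
    have := length_extM_le hC (prefW w' n)
    simp only [List.length_drop, length_prefW] at this ⊢
    omega

theorem extM_factorW_infix_of_desubstitution {ψ : A → List B} {w : ℕ → B} {w' : ℕ → A} {j : ℕ}
    (hj : j < (ψ (w' 0)).length) (hw' : ∀ n, ∃ k, (extM ψ (prefW w' n)).drop j <+: prefW w k)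
    {i : ℕ} (hi : 1 ≤ i) (k : ℕ) : ∃ n, extM ψ (factorW w' i k) <:+: prefW w n := by
  obtain ⟨n, hn⟩ := hw' (i + k)
  have hji : j ≤ (extM ψ (prefW w' i)).length := by
    have := ((prefW_prefix w' hi).extM ψ).length_le
    rw [prefW_one, extM_singleton] at this
    omega
  rw [prefW_add, extM_append, List.drop_append_of_le_length hji] at hn
  exact ⟨n, (List.suffix_append _ _).isInfix.trans hn.isInfix⟩

end Desubstitution

end

/-- Under Assumption ∗, for a leaf `A'`, an unbounded `g ∈ A'` and
`G' = (A', φ|_{A'}, g)` pushy, every infinite factor of `L_{G'}` contains arbitrarily long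
factors over bounded letters. -/
theorem stmt11 {A : Type*} [Fintype A] (φ : A → List A) (hφ : NonErasing φ)
    (hstar : ∀ (a : A) (n : ℕ), 1 ≤ n → alph ((extM φ)^[n] [a]) = alph (φ a))
    (A' : Set A) (hA' : IsLeaf φ A')
    (g : A) (hg : g ∈ A') (hgu : ¬ BddLetter φ g)
    (hpushy : Pushy φ [g]) :
    ∀ winf : ℕ → A, (∀ n : ℕ, prefW winf n ∈ LangD0L φ [g]) →
      ∀ M : ℕ, ∃ v : List A, (∃ n : ℕ, v <:+: prefW winf n) ∧ M ≤ v.length ∧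
        ∀ a ∈ v, BddLetter φ a := by
  intro winf hwinf M
  have hstable : AlphIterStable φ := hstar
  obtain ⟨t, ⟨n₀, ht⟩, hMt, ht_bdd⟩ := hpushy.exists_mem_langD0L_length_ge M
  have hg_rec : g ∈ (extM φ)^[n₀ + 1] [g] := by
    have hgg : g ∈ alph (φ g) := (hA'.alph_eq hstable hg hgu).symm ▸ hg
    rwa [← hstar g (n₀ + 1) le_add_self] at hgg
  obtain ⟨w', j, hw'L, hj, hw'⟩ := exists_desubstitution
    (fun _ hu _ hv => mem_langD0L_of_infix hu hv)
    fun n => langD0L_subset_factImg_iterate (singleton_infix_of_mem hg_rec) (hwinf n)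
  by_cases hunb : ∃ i, 1 ≤ i ∧ ¬ BddLetter φ (w' i)
  · obtain ⟨i, hi, hiu⟩ := hunb
    have hiA' : w' i ∈ A' := mem_of_mem_langD0L hA'.1.2.1.le (by simpa [alph] using hg)
      (hw'L (i + 1)) (apply_mem_prefW w' (Nat.lt_succ_self i))
    obtain ⟨n, hn⟩ := extM_factorW_infix_of_desubstitution hj hw' hi 1
    rw [factorW_one, extM_singleton] at hn
    have hgi := hA'.iterate_extM_infix_iterate_extM_succ hstable hg hiA' hiu n₀
    exact ⟨t, ⟨n, ht.trans (hgi.trans hn)⟩, hMt, ht_bdd⟩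
  · push Not at hunb
    obtain ⟨n, hn⟩ := extM_factorW_infix_of_desubstitution hj hw' le_rfl M
    rw [extM_iterate_extM_singleton] at hn
    refine ⟨_, ⟨n, hn⟩, ?_, bddLetter_of_mem_iterate_extM ?_ _⟩
    · simpa using length_le_length_iterate_extM hφ (n₀ + 1) (factorW w' 1 M)
    · simp only [factorW, List.mem_map, List.mem_range]
      rintro _ ⟨l, -, rfl⟩
      exact hunb _ le_self_add
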